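/- arXiv:2111.02456 — 2 statements merged into one kernel-verified Lean document; each statement's English description precedes it below -/
import Mathlib

section
/- Let λ : (0,∞) → (0,∞) be continuously differentiable and suppose there exists a constant c** > 0 such that for all a > 0, ∫₀¹ s^{n−1} λ(a s) ds − ∫₀¹ sⁿ λ(a s) ds = c** ∫₀¹ sⁿ λ(a s) ds (all integrals assumed finite). Then λ satisfies the ODE λ(a)(1 − n c**) = a λ′(a) c** for all a > 0, hence λ(a) = C a^{(1−n c**)/c**} for some constant C > 0. -/
open MeasureTheory Real

/-- If `λ : (0,∞) → (0,∞)` is `C¹` and for some constant `c** > 0` and all `a > 0`,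
`∫₀¹ s^{n−1} λ(a s) ds − ∫₀¹ sⁿ λ(a s) ds = c** ∫₀¹ sⁿ λ(a s) ds`, then
`λ(a)(1 − n c**) = a λ′(a) c**` for all `a > 0`, and hence
`λ(a) = C a^{(1−n c**)/c**}` for some `C > 0`. -/
theorem stmt7 (n : ℕ) (hn : 1 ≤ n) (css : ℝ) (hcss : 0 < css) (l : ℝ → ℝ)
    (hC1 : ContDiffOn ℝ 1 l (Set.Ioi 0)) (hpos : ∀ a ∈ Set.Ioi (0:ℝ), 0 < l a)
    (hint : ∀ a ∈ Set.Ioi (0:ℝ), ∀ j : ℕ,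
      IntegrableOn (fun s => s ^ j * l (a * s)) (Set.Ioo (0:ℝ) 1))
    (heq : ∀ a ∈ Set.Ioi (0:ℝ),
      (∫ s in (0:ℝ)..1, s ^ (n - 1) * l (a * s)) - ∫ s in (0:ℝ)..1, s ^ n * l (a * s)
        = css * ∫ s in (0:ℝ)..1, s ^ n * l (a * s)) :
    (∀ a ∈ Set.Ioi (0:ℝ), l a * (1 - n * css) = a * deriv l a * css) ∧
    ∃ C : ℝ, 0 < C ∧ ∀ a ∈ Set.Ioi (0:ℝ), l a = C * a ^ ((1 - n * css) / css) := by
  obtain ⟨m, rfl⟩ : ∃ m, n = m + 1 := ⟨n - 1, (Nat.succ_pred_eq_of_pos hn).symm⟩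
  clear hn
  have hcont : ContinuousOn l (Set.Ioi 0) := hC1.continuousOn
  have hdiff : ∀ a ∈ Set.Ioi (0:ℝ), DifferentiableAt ℝ l a := fun a ha =>
    (hC1.differentiableOn one_ne_zero).differentiableAt (isOpen_Ioi.mem_nhds ha)
  set g : ℕ → ℝ → ℝ := fun j t => t ^ j * l t with hgdef
  have hgcont : ∀ j, ContinuousOn (g j) (Set.Ioi 0) :=
    fun j => ((continuous_pow j).continuousOn).mul hcont
  -- interval integrability of `g j` on `[0, a]`
  have hgint : ∀ j, ∀ a ∈ Set.Ioi (0:ℝ), IntervalIntegrable (g j) volume 0 a := by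
    intro j a ha
    have ha0 : a ≠ 0 := ne_of_gt ha
    have h1 : IntegrableOn (fun s => s ^ j * l (a * s)) (Set.Ioo (0:ℝ) 1) := hint a ha j
    have h2 : IntegrableOn (fun s => g j (a * s)) (Set.Ioo (0:ℝ) 1) := by
      have h3 := h1.const_mul (a ^ j)
      have h4 : (fun s => g j (a * s)) = fun s => a ^ j * (s ^ j * l (a * s)) := by
        funext s; simp only [hgdef, mul_pow]; ring
      rw [h4]; exact h3
    have h3 : IntervalIntegrable (fun s => g j (a * s)) volume 0 1 := by
      rw [intervalIntegrable_iff_integrableOn_Ioo_of_le zero_le_one]; exact h2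
    have h4 := h3.comp_mul_left (c := a⁻¹)
    have h5 : (fun x => g j (a * (a⁻¹ * x))) = g j := by
      funext x; congr 1; field_simp
    simp only [h5] at h4
    simpa [ha0] using h4
  set Q : ℕ → ℝ → ℝ := fun j a => ∫ t in (0:ℝ)..a, g j t with hQdef
  have hQder : ∀ j, ∀ a ∈ Set.Ioi (0:ℝ), HasDerivAt (Q j) (g j a) a := by
    intro j a ha
    exact intervalIntegral.integral_hasDerivAt_right (hgint j a ha)
      (ContinuousOn.stronglyMeasurableAtFilter isOpen_Ioi (hgcont j) a ha)
      ((hgcont j).continuousAt (isOpen_Ioi.mem_nhds ha))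
  -- change of variables
  have hchg : ∀ j, ∀ a ∈ Set.Ioi (0:ℝ),
      Q j a = a ^ (j + 1) * ∫ s in (0:ℝ)..1, s ^ j * l (a * s) := by
    intro j a ha
    have ha0 : a ≠ 0 := ne_of_gt ha
    have h1 := intervalIntegral.integral_comp_mul_left (g j) ha0 (a := 0) (b := 1)
    simp only [mul_zero, mul_one, smul_eq_mul] at h1
    have h2 : (∫ x in (0:ℝ)..1, g j (a * x))
        = a ^ j * ∫ s in (0:ℝ)..1, s ^ j * l (a * s) := by
      rw [← intervalIntegral.integral_const_mul]
      apply intervalIntegral.integral_congr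
      intro x _
      simp only [hgdef, mul_pow]; ring
    rw [h2] at h1
    rw [hQdef]
    field_simp at h1 ⊢
    rw [← h1]; ring
  -- the relation a * Q m a = (1 + css) * Q (m+1) a
  have key1 : ∀ a ∈ Set.Ioi (0:ℝ), a * Q m a = (1 + css) * Q (m + 1) a := by
    intro a ha
    have ha0 : a ≠ 0 := ne_of_gt ha
    have h1 := heq a ha
    simp only [Nat.add_sub_cancel] at h1
    have h2 : (∫ s in (0:ℝ)..1, s ^ m * l (a * s))
        = (1 + css) * ∫ s in (0:ℝ)..1, s ^ (m + 1) * l (a * s) := by linarith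
    rw [hchg m a ha, hchg (m + 1) a ha, h2]; ring
  -- helper : a function vanishing on Ioi 0 has zero derivative there
  have hzero : ∀ a ∈ Set.Ioi (0:ℝ), ∀ (F : ℝ → ℝ) (d : ℝ),
      (∀ x ∈ Set.Ioi (0:ℝ), F x = 0) → HasDerivAt F d a → d = 0 := by
    intro a ha F d hF hFd
    have hev : F =ᶠ[nhds a] fun _ => (0:ℝ) := by
      filter_upwards [isOpen_Ioi.mem_nhds ha] with x hx using hF x hx
    have h1 := hFd.deriv
    rw [Filter.EventuallyEq.deriv_eq hev] at h1
    simpa using h1.symm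
  -- Q m a = css * a^(m+1) * l a
  have key2 : ∀ a ∈ Set.Ioi (0:ℝ), Q m a = css * a ^ (m + 1) * l a := by
    intro a ha
    have hF : HasDerivAt (fun x => x * Q m x - (1 + css) * Q (m + 1) x)
        (1 * Q m a + a * g m a - (1 + css) * g (m + 1) a) a :=
      ((hasDerivAt_id a).mul (hQder m a ha)).sub ((hQder (m + 1) a ha).const_mul (1 + css))
    have h0 := hzero a ha _ _ (fun x hx => by rw [key1 x hx]; ring) hF
    have hg1 : a * g m a = a ^ (m + 1) * l a := by simp only [hgdef]; ring
    have hg2 : g (m + 1) a = a ^ (m + 1) * l a := rfl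
    rw [hg1, hg2] at h0
    nlinarith [h0]
  -- the ODE
  have hODE : ∀ a ∈ Set.Ioi (0:ℝ), l a * (1 - (m + 1 : ℕ) * css) = a * deriv l a * css := by
    intro a ha
    have ha0 : a ≠ 0 := ne_of_gt ha
    have hpowl : HasDerivAt (fun x : ℝ => x ^ (m + 1) * l x)
        ((↑(m + 1) * a ^ m) * l a + a ^ (m + 1) * deriv l a) a := by
      have := (hasDerivAt_pow (m + 1) a).fun_mul (hdiff a ha).hasDerivAt
      simpa using this
    have hF : HasDerivAt (fun x => Q m x - css * (x ^ (m + 1) * l x))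
        (g m a - css * ((↑(m + 1) * a ^ m) * l a + a ^ (m + 1) * deriv l a)) a :=
      (hQder m a ha).sub (hpowl.const_mul css)
    have h0 := hzero a ha _ _ (fun x hx => by rw [key2 x hx]; ring) hF
    have hg : g m a = a ^ m * l a := rfl
    rw [hg] at h0
    have hm : a ^ m ≠ 0 := pow_ne_zero m ha0
    have h1 : a ^ m * (l a * (1 - (m + 1 : ℕ) * css) - a * deriv l a * css) = 0 := by
      push_cast at h0 ⊢
      linear_combination h0
    have h2 := (mul_eq_zero.mp h1).resolve_left hm
    linarith
  refine ⟨hODE, ?_⟩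
  set k : ℝ := (1 - (m + 1 : ℕ) * css) / css with hkdef
  have hder : ∀ a ∈ Set.Ioi (0:ℝ), HasDerivAt (fun x => l x * x ^ (-k)) 0 a := by
    intro a ha
    have ha0 : a ≠ 0 := ne_of_gt ha
    have h1 : HasDerivAt (fun x : ℝ => x ^ (-k)) (-k * a ^ (-k - 1)) a :=
      Real.hasDerivAt_rpow_const (Or.inl ha0)
    have h2 := (hdiff a ha).hasDerivAt.fun_mul h1
    refine h2.congr_deriv ?_
    have h3 := hODE a ha
    push_cast at h3
    have hk2 : k * css = 1 - ((m : ℝ) + 1) * css := by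
      rw [hkdef]; push_cast; field_simp
    have hda2 : deriv l a * a = k * l a := by
      apply mul_right_cancel₀ hcss.ne'
      linear_combination -h3 - l a * hk2
    have hda3 : deriv l a = k * l a / a := by
      rw [eq_div_iff ha0]; linear_combination hda2
    have hsub : a ^ (-k - 1) = a ^ (-k) / a := by
      rw [Real.rpow_sub ha, Real.rpow_one]
    rw [hda3, hsub]
    ring
  have hconst : ∀ a ∈ Set.Ioi (0:ℝ), l a * a ^ (-k) = l 1 * (1:ℝ) ^ (-k) := by
    intro a ha
    exact (convex_Ioi (0:ℝ)).is_const_of_fderivWithin_eq_zero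
      (fun x hx => ((hder x hx).differentiableAt).differentiableWithinAt)
      (fun x hx => by
        rw [fderivWithin_of_isOpen isOpen_Ioi hx, (hder x hx).hasFDerivAt.fderiv]
        ext; simp)
      ha (by norm_num : (1:ℝ) ∈ Set.Ioi 0)
  refine ⟨l 1, hpos 1 (by norm_num), fun a ha => ?_⟩
  have h1 := hconst a ha
  rw [Real.one_rpow, mul_one] at h1
  have hak : a ^ (-k) * a ^ k = 1 := by
    rw [← Real.rpow_add ha]; simp
  calc l a = l a * (a ^ (-k) * a ^ k) := by rw [hak, mul_one]
    _ = (l a * a ^ (-k)) * a ^ k := by ring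
    _ = l 1 * a ^ k := by rw [h1]
end

section
/- For the stable SP with λ(s) = σ s^{−1−σ}, σ ∈ (0,1), and any prior density f_{Ψ₁} on (0,∞), the unnormalized posterior density e^{−Σ_{i=1}^n φ_i(a)} · ∏_{i=1}^{k} ∫₀¹ s^{m_i}(1−s)^{n−m_i} a λ(a s) ds · f_{Ψ₁}(a) equals (∏_{i=1}^k σ B(m_i−σ, n−m_i+1)) · a^{−kσ} e^{−σ a^{−σ} Σ_{i=1}^n B(1−σ,i)} f_{Ψ₁}(a); hence after normalization it depends on the data only through n and k. -/
open MeasureTheory Real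

/-- Euler Beta function as an integral. -/
noncomputable def eulerBeta (x y : ℝ) : ℝ := ∫ s in (0:ℝ)..1, s ^ (x - 1) * (1 - s) ^ (y - 1)

lemma key_integral (σ a : ℝ) (hσ0 : 0 < σ) (hσ1 : σ < 1) (ha : 0 < a) (p q : ℕ)
    (hp : 1 ≤ p) :
    (∫ s in (0:ℝ)..1, s ^ p * (1 - s) ^ q * (a * (σ * (a * s) ^ (-1 - σ))))
      = σ * a ^ (-σ) * eulerBeta ((p : ℝ) - σ) ((q : ℝ) + 1) := by
  unfold eulerBeta
  rw [← intervalIntegral.integral_const_mul]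
  apply intervalIntegral.integral_congr_ae
  filter_upwards with s hs
  rw [Set.uIoc_of_le (by norm_num : (0:ℝ) ≤ 1)] at hs
  obtain ⟨hs0, hs1⟩ := hs
  have h2 : a * a ^ (-1 - σ) = a ^ (-σ) := by
    nth_rewrite 1 [← Real.rpow_one a]
    rw [← Real.rpow_add ha]; norm_num; ring_nf
  have h1 : s ^ ((p:ℝ)) * s ^ (-1 - σ) = s ^ ((p:ℝ) - σ - 1) := by
    rw [← Real.rpow_add hs0]; ring_nf
  have hq : (q:ℝ) + 1 - 1 = (q:ℝ) := by ring
  rw [Real.mul_rpow ha.le hs0.le, hq, ← Real.rpow_natCast s p,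
    ← Real.rpow_natCast (1 - s) q, ← h1, ← h2]
  ring

/-- For the stable SP with `λ(s) = σ s^{−1−σ}`, `σ ∈ (0,1)`, and any prior density
`f_{Ψ₁}` on `(0,∞)`, the unnormalized posterior density
`e^{−Σ φ_i(a)} ∏_{i=1}^k ∫₀¹ s^{m_i}(1−s)^{n−m_i} a λ(a s) ds · f(a)` equals
`(∏_{i=1}^k σ B(m_i−σ, n−m_i+1)) a^{−kσ} e^{−σ a^{−σ} Σ_{i=1}^n B(1−σ,i)} f(a)`;
hence after normalization it depends on the data only through `n` and `k`. -/
theorem stmt15 (σ : ℝ) (hσ : σ ∈ Set.Ioo (0:ℝ) 1) (f : ℝ → ℝ) (hf : ∀ a, 0 ≤ f a)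
    (k n : ℕ) (hk : 1 ≤ k) (m : Fin k → ℕ) (hm : ∀ i, 1 ≤ m i ∧ m i ≤ n)
    (a : ℝ) (ha : 0 < a) :
    Real.exp (-(∑ i ∈ Finset.range n,
        ∫ s in (0:ℝ)..1, s * (1 - s) ^ i * (a * (σ * (a * s) ^ (-1 - σ))))) *
      (∏ i : Fin k,
        ∫ s in (0:ℝ)..1, s ^ (m i) * (1 - s) ^ (n - m i) * (a * (σ * (a * s) ^ (-1 - σ)))) *
      f a
    = (∏ i : Fin k, σ * eulerBeta ((m i : ℝ) - σ) ((n : ℝ) - (m i : ℝ) + 1)) *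
        (a ^ (-(k * σ)) *
          (Real.exp (-(σ * a ^ (-σ) * ∑ i ∈ Finset.range n, eulerBeta (1 - σ) (i + 1))) *
            f a)) := by
  obtain ⟨hσ0, hσ1⟩ := hσ
  have hsum : (∑ i ∈ Finset.range n,
      ∫ s in (0:ℝ)..1, s * (1 - s) ^ i * (a * (σ * (a * s) ^ (-1 - σ))))
      = σ * a ^ (-σ) * ∑ i ∈ Finset.range n, eulerBeta (1 - σ) ((i:ℝ) + 1) := by
    rw [Finset.mul_sum]
    refine Finset.sum_congr rfl fun i _ => ?_
    have h := key_integral σ a hσ0 hσ1 ha 1 i le_rfl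
    simpa using h
  have hpow : a ^ (-(k * σ)) = (a ^ (-σ)) ^ k := by
    rw [← Real.rpow_natCast (a ^ (-σ)) k, ← Real.rpow_mul ha.le]
    ring_nf
  have hprod : (∏ i : Fin k,
      ∫ s in (0:ℝ)..1, s ^ (m i) * (1 - s) ^ (n - m i) * (a * (σ * (a * s) ^ (-1 - σ))))
      = (∏ i : Fin k, σ * eulerBeta ((m i : ℝ) - σ) ((n : ℝ) - (m i : ℝ) + 1))
        * a ^ (-(k * σ)) := by
    have heach : ∀ i : Fin k,
        (∫ s in (0:ℝ)..1, s ^ (m i) * (1 - s) ^ (n - m i) * (a * (σ * (a * s) ^ (-1 - σ))))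
        = (σ * eulerBeta ((m i : ℝ) - σ) ((n : ℝ) - (m i : ℝ) + 1)) * a ^ (-σ) := by
      intro i
      have h := key_integral σ a hσ0 hσ1 ha (m i) (n - m i) (hm i).1
      rw [Nat.cast_sub (hm i).2] at h
      rw [h]; ring
    rw [Finset.prod_congr rfl fun i _ => heach i, Finset.prod_mul_distrib,
      Finset.prod_const, Finset.card_univ, Fintype.card_fin, hpow]
  rw [hsum, hprod]
  ring
end
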